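/- arXiv:1205.1298 — 2 statements merged into one kernel-verified Lean document; each statement's English description precedes it below -/
import Mathlib

section
/- Let H : ℝ → M_n(ℂ) with H(t) Hermitian for all t, F_1,…,F_K : ℝ → M_n(ℂ), γ_1,…,γ_K > 0, with Lindblad dissipator L(t)ρ = Σ_α γ_α (F_α(t) ρ F_α(t)† − (1/2)(F_α(t)† F_α(t) ρ + ρ F_α(t)† F_α(t))). Let ρ : ℝ → M_n(ℂ) be differentiable with ρ(t) Hermitian for all t and ρ′(t) = −i[H(t), ρ(t)] + L(t)ρ(t). Suppose at some time t₀ the state is pure: ρ(t₀) = φφ† with ‖φ‖ = 1. If the derivative of the purity vanishes at t₀, i.e. (d/dt Tr[ρ(t)²])(t₀) = 0, then F_α(t₀) φ = ⟨φ, F_α(t₀) φ⟩ φ for every α = 1,…,K. -/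
open Matrix
open scoped ComplexConjugate InnerProductSpace

/-- The Lindblad dissipator with jump operators `F α` and rates `γ α`. -/
noncomputable def dissip {n K : ℕ} (γ : Fin K → ℝ) (F : Fin K → Matrix (Fin n) (Fin n) ℂ)
    (ρ : Matrix (Fin n) (Fin n) ℂ) : Matrix (Fin n) (Fin n) ℂ :=
  ∑ α, (γ α : ℂ) •
    (F α * ρ * (F α)ᴴ - (1 / 2 : ℂ) • ((F α)ᴴ * F α * ρ + ρ * ((F α)ᴴ * F α)))

/-- The rank-one outer product `φφ†` of a vector with itself. -/
noncomputable def outer {n : ℕ} (φ : EuclideanSpace ℂ (Fin n)) : Matrix (Fin n) (Fin n) ℂ :=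
  fun i j => φ i * conj (φ j)

/-- A matrix acting on a vector of `EuclideanSpace ℂ (Fin n)`. -/
noncomputable def matVec {n : ℕ} (M : Matrix (Fin n) (Fin n) ℂ)
    (φ : EuclideanSpace ℂ (Fin n)) : EuclideanSpace ℂ (Fin n) :=
  WithLp.toLp 2 (fun i => ∑ j, M i j * φ j)

/-! Along the flow, `d/dt Tr ρ² = 2 Tr (ρ' ρ)`. At a pure state `P = φφ†` the Hamiltonian part
contributes `Tr ([H, P] P) = 0` because `P² = P`, while a jump operator `F` with rate `γ`
contributes `-γ ‖Fφ - ⟪φ, Fφ⟫ φ‖²`, i.e. `-γ` times the squared distance of `Fφ` from the line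
through `φ`. With all rates positive, a vanishing purity derivative forces every one of these
distances to vanish. -/

lemma norm_sub_inner_smul_sq {𝕜 E : Type*} [RCLike 𝕜] [NormedAddCommGroup E]
    [InnerProductSpace 𝕜 E] {φ : E} (hφ : ‖φ‖ = 1) (ψ : E) :
    ‖ψ - ⟪φ, ψ⟫_𝕜 • φ‖ ^ 2 = ‖ψ‖ ^ 2 - ‖⟪φ, ψ⟫_𝕜‖ ^ 2 := by
  rw [@norm_sub_sq 𝕜, inner_smul_right, ← inner_conj_symm, RCLike.conj_mul, norm_smul, hφ,
    RCLike.norm_conj]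
  norm_cast
  ring

lemma Matrix.trace_commutator_mul_eq_zero {m R : Type*} [Fintype m] [CommRing R]
    {P : Matrix m m R} (hP : IsIdempotentElem P) (A : Matrix m m R) :
    ((A * P - P * A) * P).trace = 0 := by
  rw [sub_mul, trace_sub, Matrix.mul_assoc, hP.eq, trace_mul_comm (P * A), ← Matrix.mul_assoc,
    hP.eq, trace_mul_comm, sub_self]

theorem Matrix.hasDerivAt_trace_mul_self {m 𝔸 : Type*} [Fintype m] [NormedCommRing 𝔸]
    [NormedAlgebra ℝ 𝔸] {A : ℝ → Matrix m m 𝔸} {A' : Matrix m m 𝔸} {t : ℝ}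
    (hA : ∀ i j, HasDerivAt (fun s => A s i j) (A' i j) t) :
    HasDerivAt (fun s => (A s * A s).trace) (2 * (A' * A t).trace) t := by
  have hsum : HasDerivAt (fun s => ∑ i, ∑ j, A s i j * A s j i)
      (∑ i, ∑ j, (A' i j * A t j i + A t i j * A' j i)) t :=
    HasDerivAt.fun_sum fun i _ => HasDerivAt.fun_sum fun j _ => (hA i j).mul (hA j i)
  convert hsum using 1
  · ext s
    simp only [trace, diag_apply, mul_apply]
  · rw [two_mul]
    nth_rw 2 [trace_mul_comm]
    simp only [trace, diag_apply, mul_apply, Finset.sum_add_distrib]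

lemma eq_zero_of_sum_mul_eq_zero {ι : Type*} [Fintype ι] {γ x : ι → ℝ} (hγ : ∀ i, 0 < γ i)
    (hx : ∀ i, 0 ≤ x i) (h : ∑ i, γ i * x i = 0) (i : ι) : x i = 0 := by
  have := (Finset.sum_eq_zero_iff_of_nonneg fun j _ => mul_nonneg (hγ j).le (hx j)).1 h i
    (Finset.mem_univ i)
  exact (mul_eq_zero.1 this).resolve_left (hγ i).ne'

section RankOne

variable {n : ℕ}

lemma outer_eq_vecMulVec (φ : EuclideanSpace ℂ (Fin n)) :
    outer φ = vecMulVec (WithLp.ofLp φ) (star (WithLp.ofLp φ)) := rfl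

lemma matVec_eq_toLp_mulVec (M : Matrix (Fin n) (Fin n) ℂ) (φ : EuclideanSpace ℂ (Fin n)) :
    matVec M φ = WithLp.toLp 2 (M *ᵥ WithLp.ofLp φ) := rfl

lemma isIdempotentElem_outer {φ : EuclideanSpace ℂ (Fin n)} (hφ : ‖φ‖ = 1) :
    IsIdempotentElem (outer φ) := by
  have h : star (WithLp.ofLp φ) ⬝ᵥ WithLp.ofLp φ = 1 := by
    rw [dotProduct_comm, ← EuclideanSpace.inner_eq_star_dotProduct, inner_self_eq_norm_sq_to_K,
      hφ]
    simp
  rw [IsIdempotentElem, outer_eq_vecMulVec, vecMulVec_mul_vecMulVec, h, one_smul]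

lemma mul_outer_mul_conjTranspose (M : Matrix (Fin n) (Fin n) ℂ) (φ : EuclideanSpace ℂ (Fin n)) :
    M * outer φ * Mᴴ = outer (matVec M φ) := by
  rw [outer_eq_vecMulVec, mul_vecMulVec, vecMulVec_mul, ← star_mulVec]
  rfl

lemma matVec_outer (φ ψ : EuclideanSpace ℂ (Fin n)) :
    matVec (outer ψ) φ = ⟪ψ, φ⟫_ℂ • ψ := by
  rw [matVec_eq_toLp_mulVec, outer_eq_vecMulVec, vecMulVec_mulVec, op_smul_eq_smul,
    dotProduct_comm]
  rfl

lemma trace_mul_outer (M : Matrix (Fin n) (Fin n) ℂ) (φ : EuclideanSpace ℂ (Fin n)) :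
    (M * outer φ).trace = ⟪φ, matVec M φ⟫_ℂ := by
  rw [outer_eq_vecMulVec, mul_vecMulVec, trace_vecMulVec]
  rfl

lemma trace_outer (φ : EuclideanSpace ℂ (Fin n)) : (outer φ).trace = (‖φ‖ ^ 2 : ℝ) := by
  rw [← one_mul (outer φ), trace_mul_outer, matVec_eq_toLp_mulVec, one_mulVec,
    WithLp.toLp_ofLp, inner_self_eq_norm_sq_to_K]
  norm_cast

lemma trace_outer_mul_outer (φ ψ : EuclideanSpace ℂ (Fin n)) :
    (outer ψ * outer φ).trace = (‖⟪φ, ψ⟫_ℂ‖ ^ 2 : ℝ) := by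
  rw [trace_mul_outer, matVec_outer, inner_smul_right, ← inner_conj_symm, Complex.conj_mul']
  norm_cast

lemma trace_conjTranspose_mul_self_mul_outer (M : Matrix (Fin n) (Fin n) ℂ)
    (φ : EuclideanSpace ℂ (Fin n)) :
    (Mᴴ * M * outer φ).trace = (‖matVec M φ‖ ^ 2 : ℝ) := by
  rw [Matrix.mul_assoc, trace_mul_comm, mul_outer_mul_conjTranspose, trace_outer]

end RankOne

section Dissipation

variable {n : ℕ} {φ : EuclideanSpace ℂ (Fin n)}

lemma trace_jump_mul_outer (hφ : ‖φ‖ = 1) (L : Matrix (Fin n) (Fin n) ℂ) :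
    ((L * outer φ * Lᴴ - (1 / 2 : ℂ) • (Lᴴ * L * outer φ + outer φ * (Lᴴ * L))) *
      outer φ).trace = -(‖matVec L φ - ⟪φ, matVec L φ⟫_ℂ • φ‖ ^ 2 : ℝ) := by
  have hP := isIdempotentElem_outer hφ
  have hsandwich : (outer φ * (Lᴴ * L) * outer φ).trace = (Lᴴ * L * outer φ).trace := by
    rw [trace_mul_comm, ← Matrix.mul_assoc, hP.eq, trace_mul_comm]
  rw [sub_mul, Matrix.smul_mul, add_mul, trace_sub, trace_smul, trace_add, hsandwich,
    Matrix.mul_assoc (Lᴴ * L), hP.eq, mul_outer_mul_conjTranspose, trace_outer_mul_outer,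
    trace_conjTranspose_mul_self_mul_outer, norm_sub_inner_smul_sq hφ]
  push_cast
  ring

lemma trace_dissip_outer_mul_outer (hφ : ‖φ‖ = 1) {K : ℕ} (γ : Fin K → ℝ)
    (F : Fin K → Matrix (Fin n) (Fin n) ℂ) :
    (dissip γ F (outer φ) * outer φ).trace =
      -(∑ α, γ α * ‖matVec (F α) φ - ⟪φ, matVec (F α) φ⟫_ℂ • φ‖ ^ 2 : ℝ) := by
  simp only [dissip, Finset.sum_mul, trace_sum, Matrix.smul_mul, trace_smul,
    trace_jump_mul_outer hφ]
  push_cast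
  simp [Finset.sum_neg_distrib]

end Dissipation

theorem tDFS_vanishing_purity_derivative_implies_eigenvector_general (n K : ℕ)
    (H : ℝ → Matrix (Fin n) (Fin n) ℂ)
    (F : Fin K → ℝ → Matrix (Fin n) (Fin n) ℂ)
    (γ : Fin K → ℝ) (hγ : ∀ α, 0 < γ α)
    (ρ ρ' : ℝ → Matrix (Fin n) (Fin n) ℂ)
    (hder : ∀ t i j, HasDerivAt (fun s => ρ s i j) (ρ' t i j) t)
    (hmaster : ∀ t, ρ' t =
      (-Complex.I) • (H t * ρ t - ρ t * H t) + dissip γ (fun α => F α t) (ρ t))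
    (t₀ : ℝ) (φ : EuclideanSpace ℂ (Fin n)) (hφ : ‖φ‖ = 1)
    (hpure : ρ t₀ = outer φ)
    (hpurity : HasDerivAt (fun s => (ρ s * ρ s).trace) 0 t₀) :
    ∀ α, matVec (F α t₀) φ = ⟪φ, matVec (F α t₀) φ⟫_ℂ • φ := by
  have hflow : (ρ' t₀ * ρ t₀).trace = 0 := by
    simpa using (hasDerivAt_trace_mul_self (hder t₀)).unique hpurity
  have hloss : ∑ α, γ α * ‖matVec (F α t₀) φ - ⟪φ, matVec (F α t₀) φ⟫_ℂ • φ‖ ^ 2 = 0 := by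
    rw [hmaster, hpure, add_mul, trace_add, smul_mul,
      trace_smul, trace_commutator_mul_eq_zero (isIdempotentElem_outer hφ), smul_zero, zero_add,
      trace_dissip_outer_mul_outer hφ, neg_eq_zero] at hflow
    exact_mod_cast hflow
  intro α
  have hdist := eq_zero_of_sum_mul_eq_zero hγ (fun _ => sq_nonneg _) hloss α
  rwa [sq_eq_zero_iff, norm_eq_zero, sub_eq_zero] at hdist

/-- (Necessity.) If a Hermitian solution of the Lindblad master
equation (with strictly positive rates) is pure at time `t₀`, `ρ(t₀) = φφ†` with
`‖φ‖ = 1`, and the derivative of the purity vanishes at `t₀`, then `φ` is a common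
eigenvector of all jump operators at time `t₀`. -/
theorem tDFS_vanishing_purity_derivative_implies_eigenvector (n K : ℕ)
    (H : ℝ → Matrix (Fin n) (Fin n) ℂ) (hH : ∀ t, (H t)ᴴ = H t)
    (F : Fin K → ℝ → Matrix (Fin n) (Fin n) ℂ)
    (γ : Fin K → ℝ) (hγ : ∀ α, 0 < γ α)
    (ρ ρ' : ℝ → Matrix (Fin n) (Fin n) ℂ)
    (hder : ∀ t i j, HasDerivAt (fun s => ρ s i j) (ρ' t i j) t)
    (hherm : ∀ t, (ρ t)ᴴ = ρ t)
    (hmaster : ∀ t, ρ' t =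
      (-Complex.I) • (H t * ρ t - ρ t * H t) + dissip γ (fun α => F α t) (ρ t))
    (t₀ : ℝ) (φ : EuclideanSpace ℂ (Fin n)) (hφ : ‖φ‖ = 1)
    (hpure : ρ t₀ = outer φ)
    (hpurity : HasDerivAt (fun s => (ρ s * ρ s).trace) 0 t₀) :
    ∀ α, matVec (F α t₀) φ = ⟪φ, matVec (F α t₀) φ⟫_ℂ • φ :=
  tDFS_vanishing_purity_derivative_implies_eigenvector_general n K H F γ hγ ρ ρ' hder hmaster t₀ φ
    hφ hpure hpurity
end

section
/- Let H̄, Ḡ, F̄_1,…,F̄_K ∈ M_n(ℂ) with H̄ and Ḡ Hermitian, let γ_1,…,γ_K ≥ 0 and c_1,…,c_K ∈ ℂ, and let L̄(σ) = Σ_α γ_α (F̄_α σ F̄_α† − (1/2)(F̄_α† F̄_α σ + σ F̄_α† F̄_α)). If φ ∈ ℂ^n with ‖φ‖ = 1 satisfies F̄_α φ = c_α φ for all α, then for ρ̄ = φφ† one has −i[H̄, ρ̄] − i[Ḡ, ρ̄] + L̄(ρ̄) = −i[H̄_eff, ρ̄], where H̄_eff = H̄ + Ḡ + (i/2) Σ_{α=1}^K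 γ_α (c̄_α F̄_α − c_α F̄_α†); that is, in the rotating frame the full master-equation generator acts on such a pure state as a commutator with the effective Hamiltonian H̄_eff. -/
open Matrix
open scoped ComplexConjugate

/-! On `ρ = φφᴴ` with `F φ = c φ` (hence `φᴴ Fᴴ = c̄ φᴴ`) each dissipator term collapses:
`F ρ Fᴴ = |c|² ρ`, `Fᴴ F ρ = c Fᴴ ρ` and `ρ Fᴴ F = c̄ ρ F`, which is exactly
`-i[(i/2)(c̄ F - c Fᴴ), ρ]`. Summing over the jump operators turns the dissipator into a
commutator, which merges with the Hamiltonian commutators by linearity. -/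

theorem lindbladTerm_eq_commutator_of_mul_eq_smul {R : Type*} [Ring R] [Algebra ℂ R]
    {A B ρ : R} {c d : ℂ}
    (hA : A * ρ = c • ρ) (hB : ρ * B = d • ρ) :
    A * ρ * B - (1 / 2 : ℂ) • (B * A * ρ + ρ * (B * A)) =
      (-Complex.I) • ((Complex.I / 2) • (d • A - c • B) * ρ -
        ρ * ((Complex.I / 2) • (d • A - c • B))) := by
  rw [mul_assoc B, ← mul_assoc ρ, hA, hB]
  simp only [smul_mul_assoc, mul_smul_comm, sub_mul, mul_sub, hA, hB, smul_sub, smul_smul]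
  match_scalars <;> ring_nf <;> simp only [Complex.I_sq] <;> ring

theorem mul_outer_of_matVec_eq_smul {n : ℕ} {M : Matrix (Fin n) (Fin n) ℂ} {c : ℂ}
    {φ : EuclideanSpace ℂ (Fin n)} (h : matVec M φ = c • φ) :
    M * outer φ = c • outer φ := by
  ext i j
  have hi : ∑ k, M i k * φ k = c * φ i := congrArg (fun v => v i) h
  simp only [Matrix.mul_apply, outer, Matrix.smul_apply, smul_eq_mul, ← mul_assoc,
    ← Finset.sum_mul, hi]

theorem outer_mul_conjTranspose_of_matVec_eq_smul {n : ℕ} {M : Matrix (Fin n) (Fin n) ℂ}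
    {c : ℂ} {φ : EuclideanSpace ℂ (Fin n)} (h : matVec M φ = c • φ) :
    outer φ * Mᴴ = conj c • outer φ := by
  ext i j
  have hj : ∑ k, conj (M j k) * conj (φ k) = conj c * conj (φ j) := by
    have : ∑ k, M j k * φ k = c * φ j := congrArg (fun v => v j) h
    simpa only [map_sum, map_mul] using congrArg conj this
  simp only [Matrix.mul_apply, outer, Matrix.smul_apply, smul_eq_mul,
    Matrix.conjTranspose_apply, RCLike.star_def, mul_assoc, ← Finset.mul_sum]
  simp only [mul_comm (conj (φ _)), hj]
  ring

theorem dissip_outer_of_matVec_eq_smul {n K : ℕ} (γ : Fin K → ℝ)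
    {F : Fin K → Matrix (Fin n) (Fin n) ℂ} {c : Fin K → ℂ} {φ : EuclideanSpace ℂ (Fin n)}
    (heig : ∀ α, matVec (F α) φ = c α • φ) :
    dissip γ F (outer φ) =
      (-Complex.I) •
        (((Complex.I / 2) • ∑ α, (γ α : ℂ) • (conj (c α) • F α - c α • (F α)ᴴ)) * outer φ -
          outer φ * ((Complex.I / 2) • ∑ α, (γ α : ℂ) • (conj (c α) • F α - c α • (F α)ᴴ))) := by
  unfold dissip
  simp only [lindbladTerm_eq_commutator_of_mul_eq_smul (mul_outer_of_matVec_eq_smul (heig _))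
    (outer_mul_conjTranspose_of_matVec_eq_smul (heig _))]
  simp only [Finset.smul_sum, Finset.sum_mul, Finset.mul_sum, ← Finset.sum_sub_distrib]
  refine Finset.sum_congr rfl fun α _ => ?_
  simp only [smul_mul_assoc, mul_smul_comm]
  module

theorem tDFS_generator_acts_as_effective_Hamiltonian_general (n K : ℕ)
    (H G : Matrix (Fin n) (Fin n) ℂ)
    (F : Fin K → Matrix (Fin n) (Fin n) ℂ) (γ : Fin K → ℝ)
    (c : Fin K → ℂ) (φ : EuclideanSpace ℂ (Fin n))
    (heig : ∀ α, matVec (F α) φ = c α • φ) :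
    (-Complex.I) • (H * outer φ - outer φ * H) +
        (-Complex.I) • (G * outer φ - outer φ * G) + dissip γ F (outer φ) =
      (-Complex.I) •
        ((H + G + (Complex.I / 2) • ∑ α, (γ α : ℂ) • (conj (c α) • F α - c α • (F α)ᴴ))
            * outer φ -
          outer φ *
            (H + G + (Complex.I / 2) • ∑ α, (γ α : ℂ) • (conj (c α) • F α - c α • (F α)ᴴ))) := by
  rw [dissip_outer_of_matVec_eq_smul γ heig]
  simp only [add_mul, mul_add]
  module

/-- In the rotating frame, on a pure common eigenstate
`ρ̄ = φφ†` of the jump operators (`F̄_α φ = c_α φ`), the full master-equation generator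
`-i[H̄,ρ̄] - i[Ḡ,ρ̄] + L̄(ρ̄)` acts as the commutator `-i[H̄_eff, ρ̄]` with the effective
Hamiltonian `H̄_eff = H̄ + Ḡ + (i/2) Σ_α γ_α (c̄_α F̄_α − c_α F̄_αᴴ)`. -/
theorem tDFS_generator_acts_as_effective_Hamiltonian (n K : ℕ)
    (H G : Matrix (Fin n) (Fin n) ℂ) (hH : Hᴴ = H) (hG : Gᴴ = G)
    (F : Fin K → Matrix (Fin n) (Fin n) ℂ) (γ : Fin K → ℝ) (hγ : ∀ α, 0 ≤ γ α)
    (c : Fin K → ℂ) (φ : EuclideanSpace ℂ (Fin n)) (hφ : ‖φ‖ = 1)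
    (heig : ∀ α, matVec (F α) φ = c α • φ) :
    (-Complex.I) • (H * outer φ - outer φ * H) +
        (-Complex.I) • (G * outer φ - outer φ * G) + dissip γ F (outer φ) =
      (-Complex.I) •
        ((H + G + (Complex.I / 2) • ∑ α, (γ α : ℂ) • (conj (c α) • F α - c α • (F α)ᴴ))
            * outer φ -
          outer φ *
            (H + G + (Complex.I / 2) • ∑ α, (γ α : ℂ) • (conj (c α) • F α - c α • (F α)ᴴ))) :=
  tDFS_generator_acts_as_effective_Hamiltonian_general n K H G F γ c φ heig
end
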